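/- Assume p ≤ √(3 ln n / m) and liminf_{n→∞} d0/ln n ≥ 1. Then with high probability, for every vertex v ∈ V simultaneously: W(v) ≤ 4mp, W'(v) ≤ 4·d0, and the degree of v in G(n,m,p) is at most 12·d1. -/

import Mathlib

open MeasureTheory Filter

noncomputable def bern (p : ℝ) : Measure Bool :=
  (PMF.bernoulli (min (Real.toNNReal p) 1) (min_le_right _ _)).toMeasure

/-- The random intersection graph model: the sample space is the bipartite
choice structure `ω : Fin n → Fin m → Bool`, where `ω v w = true` means vertex `v`
chose feature `w`, each choice made independently with probability `p`. -/
noncomputable def rig (n m : ℕ) (p : ℝ) : Measure (Fin n → Fin m → Bool) :=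
  Measure.pi fun _ => Measure.pi fun _ => bern p

/-- The intersection graph determined by the choices `ω`:
two distinct vertices are adjacent iff they share a feature. -/
def rigGraph {n m : ℕ} (ω : Fin n → Fin m → Bool) : SimpleGraph (Fin n) where
  Adj v v' := v ≠ v' ∧ ∃ w, ω v w = true ∧ ω v' w = true
  symm := by constructor; rintro v v' ⟨h, w, h1, h2⟩; exact ⟨h.symm, w, h2, h1⟩
  loopless := by constructor; rintro v ⟨h, -⟩; exact h rfl

/-- degree of `v` in the intersection graph -/
noncomputable def deg {n m : ℕ} (ω : Fin n → Fin m → Bool) (v : Fin n) : ℕ :=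
  Set.ncard {u | (rigGraph ω).Adj v u}

/-- `W(v)`: number of features chosen by `v` -/
noncomputable def Wv {n m : ℕ} (ω : Fin n → Fin m → Bool) (v : Fin n) : ℕ :=
  Set.ncard {w | ω v w = true}

/-- `V(w)`: number of vertices choosing feature `w` -/
noncomputable def Vw {n m : ℕ} (ω : Fin n → Fin m → Bool) (w : Fin m) : ℕ :=
  Set.ncard {v | ω v w = true}

/-- `W'(v)`: number of features chosen by `v` that are chosen by at least two vertices -/
noncomputable def Wv' {n m : ℕ} (ω : Fin n → Fin m → Bool) (v : Fin n) : ℕ :=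
  Set.ncard {w | ω v w = true ∧ 2 ≤ Set.ncard {u | ω u w = true}}

/-- `W(S)`: number of features chosen by at least one vertex of `S` -/
noncomputable def WS {n m : ℕ} (ω : Fin n → Fin m → Bool) (S : Set (Fin n)) : ℕ :=
  Set.ncard {w | ∃ v ∈ S, ω v w = true}

/-- `V(R)`: number of vertices choosing at least one feature of `R` -/
noncomputable def VR {n m : ℕ} (ω : Fin n → Fin m → Bool) (R : Set (Fin m)) : ℕ :=
  Set.ncard {v | ∃ w ∈ R, ω v w = true}

/-- `W''(K)`: number of features chosen by at least two vertices of `K` -/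
noncomputable def WSpp {n m : ℕ} (ω : Fin n → Fin m → Bool) (K : Set (Fin n)) : ℕ :=
  Set.ncard {w | 2 ≤ Set.ncard {v | v ∈ K ∧ ω v w = true}}

/-- `N(S)`: number of vertices outside `S` adjacent to at least one vertex of `S` -/
noncomputable def NS {n m : ℕ} (ω : Fin n → Fin m → Bool) (S : Set (Fin n)) : ℕ :=
  Set.ncard {u | u ∉ S ∧ ∃ v ∈ S, (rigGraph ω).Adj v u}

noncomputable def d0 (n m : ℕ) (p : ℝ) : ℝ := m * p * (1 - (1 - p) ^ (n - 1))

noncomputable def d1 (n m : ℕ) (p : ℝ) : ℝ := n * m * p ^ 2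

/-!
Every count in the statement is dominated by a binomial-type count of independent `p`-coins, and
`P(at least k successes among N trials of probability x) ≤ C(N, k) x^k ≤ (e N x / k)^k`.
`W(v)` and `W'(v)` count features whose columns `ω · w` (independent across `w`) lie in a fixed set
of probability `p`, resp. `p (1 - (1 - p)^(n - 1))`, so their means are `mp` and `d0`. For the
degree, condition on the row `ω v = f`: every neighbour `u` of `v` shares some `w ∈ supp f`, so
`deg v` is at most the number of the `(n - 1) |supp f|` coins `ω u w`, `u ≠ v`, `w ∈ supp f`,
that come up true; these are independent of the row, and there are at most `4 (n - 1) mp` of them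
once `W(v) ≤ 4mp`. Choosing `k` a constant factor
above the mean and using `d0 ≥ (1 - o(1)) log n` (and `d0 ≤ d1`) makes each tail `o(1/n)`, and a
union bound over the `n` vertices concludes.
-/

open Set
open scoped ENNReal

namespace MeasureTheory.Measure

section Reindex

variable {ι κ α : Type*} [Fintype ι] [Fintype κ] [MeasurableSpace α]
  [MeasurableSingletonClass α] [Countable α] (μ : Measure α) [SigmaFinite μ]

theorem pi_pi_eq_map_curry :
    (Measure.pi fun _ : ι => Measure.pi fun _ : κ => μ)
      = (Measure.pi fun _ : ι × κ => μ).map Function.curry := by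
  refine Measure.ext_iff_singleton.2 fun x => ?_
  rw [Measure.map_apply (measurable_of_countable _) (.singleton x),
    show Function.curry ⁻¹' {x} = {Function.uncurry x} from
      Set.ext fun y => ⟨fun h => h ▸ rfl, fun h => (h ▸ rfl : Function.curry y = x)⟩]
  simp only [Measure.pi_singleton, Fintype.prod_prod_type, Function.uncurry_apply_pair]

theorem pi_pi_eq_map_swap :
    (Measure.pi fun _ : ι => Measure.pi fun _ : κ => μ)
      = (Measure.pi fun _ : κ => Measure.pi fun _ : ι => μ).map Function.swap := by
  refine Measure.ext_iff_singleton.2 fun x => ?_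
  rw [Measure.map_apply (measurable_of_countable _) (.singleton x),
    show Function.swap ⁻¹' {x} = {Function.swap x} from
      Set.ext fun y => ⟨fun h => h ▸ rfl, fun h => (h ▸ rfl : Function.swap y = x)⟩]
  simp only [Measure.pi_singleton]
  exact Finset.prod_comm

end Reindex

section Counting

variable {ι α : Type*} [Fintype ι] [MeasurableSpace α] {μ : ι → Measure α}
  [∀ i, IsProbabilityMeasure (μ i)] {E : ι → Set α} {A : Set α} {q : ℝ≥0∞}

theorem pi_univ_pi_inter_forall_mem_le {T : Finset ι} (hE : ∀ i ∈ T, E i = univ)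
    (hA : ∀ i ∈ T, μ i A ≤ q) :
    Measure.pi μ (univ.pi E ∩ {x | ∀ i ∈ T, x i ∈ A})
      ≤ Measure.pi μ (univ.pi E) * q ^ T.card := by
  classical
  have hset : univ.pi E ∩ {x | ∀ i ∈ T, x i ∈ A}
      = univ.pi fun i => if i ∈ T then A else E i := by
    ext x
    simp only [mem_inter_iff, mem_univ_pi]
    refine ⟨fun ⟨hxE, hxA⟩ i => ?_, fun h => ⟨fun i => ?_, fun i hi => ?_⟩⟩
    · split_ifs with hi
      exacts [hxA i hi, hxE i]
    · by_cases hi : i ∈ T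
      · simp [hE i hi]
      · simpa [hi] using h i
    · simpa [hi] using h i
  calc Measure.pi μ (univ.pi E ∩ {x | ∀ i ∈ T, x i ∈ A})
      = ∏ i, μ i (if i ∈ T then A else E i) := by rw [hset, Measure.pi_pi]
    _ ≤ ∏ i, μ i (E i) * (if i ∈ T then q else 1) := by
        refine Finset.prod_le_prod' fun i _ => ?_
        split_ifs with hi
        · simpa [hE i hi] using hA i hi
        · rw [mul_one]
    _ = Measure.pi μ (univ.pi E) * q ^ T.card := by
        rw [Finset.prod_mul_distrib, Measure.pi_pi, Finset.prod_ite_mem, Finset.univ_inter,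
          Finset.prod_const]

theorem pi_univ_pi_inter_le_choose_mul_pow {P : Finset ι} (hE : ∀ i ∈ P, E i = univ)
    (hA : ∀ i ∈ P, μ i A ≤ q) (k : ℕ) :
    Measure.pi μ (univ.pi E ∩ {x | k ≤ {i | i ∈ P ∧ x i ∈ A}.ncard})
      ≤ P.card.choose k * (Measure.pi μ (univ.pi E) * q ^ k) := by
  have hcover : univ.pi E ∩ {x | k ≤ {i | i ∈ P ∧ x i ∈ A}.ncard}
      ⊆ ⋃ T ∈ P.powersetCard k, univ.pi E ∩ {x | ∀ i ∈ T, x i ∈ A} := by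
    classical
    rintro x ⟨hxE, hk : k ≤ _⟩
    rw [← Finset.coe_filter, Set.ncard_coe_finset] at hk
    obtain ⟨T, hT, rfl⟩ := Finset.exists_subset_card_eq hk
    exact mem_biUnion (Finset.mem_powersetCard.2 ⟨hT.trans (Finset.filter_subset _ _), rfl⟩)
      ⟨hxE, fun i hi => (Finset.mem_filter.1 (hT hi)).2⟩
  calc _ ≤ ∑ T ∈ P.powersetCard k, Measure.pi μ (univ.pi E ∩ {x | ∀ i ∈ T, x i ∈ A}) :=
        (measure_mono hcover).trans (measure_biUnion_finset_le _ _)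
    _ ≤ ∑ T ∈ P.powersetCard k, Measure.pi μ (univ.pi E) * q ^ k := by
        refine Finset.sum_le_sum fun T hT => ?_
        obtain ⟨hTP, rfl⟩ := Finset.mem_powersetCard.1 hT
        exact pi_univ_pi_inter_forall_mem_le (fun i hi => hE i (hTP hi))
          fun i hi => hA i (hTP hi)
    _ = _ := by rw [Finset.sum_const, Finset.card_powersetCard, nsmul_eq_mul]

theorem pi_le_choose_mul_pow (P : Finset ι) (hA : ∀ i ∈ P, μ i A ≤ q) (k : ℕ) :
    Measure.pi μ {x | k ≤ {i | i ∈ P ∧ x i ∈ A}.ncard} ≤ P.card.choose k * q ^ k := by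
  simpa using pi_univ_pi_inter_le_choose_mul_pow (E := fun _ => univ) (by simp) hA k

end Counting

end MeasureTheory.Measure

theorem Nat.choose_mul_pow_le_exp {M k : ℕ} {x c : ℝ} (hx : 0 ≤ x) (hc : 0 < c)
    (hMx : c * M * x ≤ k) : (M.choose k : ℝ) * x ^ k ≤ Real.exp (-(Real.log c - 1) * k) := by
  rcases k.eq_zero_or_pos with rfl | hk
  · simp
  have hk' : (0 : ℝ) < k := by exact_mod_cast hk
  calc (M.choose k : ℝ) * x ^ k
      ≤ (M : ℝ) ^ k / k.factorial * x ^ k := by gcongr; exact Nat.choose_le_pow_div k M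
    _ = (M * x / k) ^ k * ((k : ℝ) ^ k / k.factorial) := by
        rw [div_pow, mul_pow]; field_simp
    _ ≤ c⁻¹ ^ k * Real.exp k := by
        gcongr
        · rw [div_le_iff₀ hk', inv_mul_eq_div, le_div_iff₀ hc]; linarith
        · exact Real.pow_div_factorial_le_exp (x := k) hk'.le k
    _ = Real.exp (-(Real.log c - 1) * k) := by
        rw [← Real.exp_log (inv_pos.2 hc), ← Real.exp_nat_mul, ← Real.exp_add, Real.log_inv]
        ring_nf

theorem natCast_mul_exp_le_rpow {N : ℕ} (hN : 0 < N) {β k a δ : ℝ} (hβ : 0 ≤ β)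
    (hk : a * Real.log N ≤ k) (hδ : 1 + δ ≤ β * a) :
    (N : ℝ) * Real.exp (-β * k) ≤ (N : ℝ) ^ (-δ) := by
  have hN' : (0 : ℝ) < N := by exact_mod_cast hN
  have hlog : 0 ≤ Real.log N := Real.log_natCast_nonneg N
  rw [Real.rpow_def_of_pos hN', ← Real.exp_log hN', ← Real.exp_add, Real.exp_log hN']
  gcongr
  nlinarith [mul_le_mul_of_nonneg_left hk hβ]

theorem natCast_mul_choose_mul_ofReal_pow_le {N M k : ℕ} (hN : 0 < N) {x c a δ : ℝ}
    (hx : 0 ≤ x) (hc : Real.exp 1 ≤ c) (hMx : c * M * x ≤ k) (hk : a * Real.log N ≤ k)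
    (hδ : 1 + δ ≤ (Real.log c - 1) * a) :
    (N : ℝ≥0∞) * (M.choose k * ENNReal.ofReal x ^ k) ≤ ENNReal.ofReal ((N : ℝ) ^ (-δ)) := by
  have hc0 : 0 < c := (Real.exp_pos 1).trans_le hc
  have hlogc : 1 ≤ Real.log c := (Real.le_log_iff_exp_le hc0).2 hc
  rw [← ENNReal.ofReal_pow hx, ← ENNReal.ofReal_natCast, ← ENNReal.ofReal_natCast (M.choose k),
    ← ENNReal.ofReal_mul (by positivity), ← ENNReal.ofReal_mul (by positivity)]
  refine ENNReal.ofReal_le_ofReal (le_trans ?_ (natCast_mul_exp_le_rpow hN (by linarith) hk hδ))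
  gcongr
  exact Nat.choose_mul_pow_le_exp hx hc0 hMx

section RandomIntersectionGraph

variable {n m : ℕ} {p : ℝ}

instance (p : ℝ) : IsProbabilityMeasure (bern p) := by
  unfold bern; infer_instance

instance (n m : ℕ) (p : ℝ) : IsProbabilityMeasure (rig n m p) := by
  unfold rig; infer_instance

theorem bern_singleton_true (hp1 : p ≤ 1) : bern p {true} = ENNReal.ofReal p := by
  rw [bern, PMF.toMeasure_apply_singleton _ _ (measurableSet_singleton _)]
  change ((min p.toNNReal 1 : NNReal) : ℝ≥0∞) = _
  rw [min_eq_left (Real.toNNReal_le_one.2 hp1)]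
  rfl

theorem bern_singleton_false (hp0 : 0 ≤ p) (hp1 : p ≤ 1) :
    bern p {false} = ENNReal.ofReal (1 - p) := by
  rw [bern, PMF.toMeasure_apply_singleton _ _ (measurableSet_singleton _)]
  change ((1 - min p.toNNReal 1 : NNReal) : ℝ≥0∞) = _
  rw [min_eq_left (Real.toNNReal_le_one.2 hp1), ENNReal.coe_sub, ENNReal.coe_one,
    ENNReal.ofReal_sub _ hp0, ENNReal.ofReal_one]
  rfl

theorem rig_eq_map_swap : rig n m p
    = (Measure.pi fun _ : Fin m => Measure.pi fun _ : Fin n => bern p).map Function.swap :=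
  Measure.pi_pi_eq_map_swap _

theorem rig_eq_map_curry :
    rig n m p = (Measure.pi fun _ : Fin n × Fin m => bern p).map Function.curry :=
  Measure.pi_pi_eq_map_curry _

theorem pi_bern_eval_true (hp1 : p ≤ 1) (v : Fin n) :
    Measure.pi (fun _ => bern p) {g : Fin n → Bool | g v = true} = ENNReal.ofReal p := by
  rw [← bern_singleton_true hp1]
  exact (measurePreserving_eval _ v).measure_preimage (measurableSet_singleton _).nullMeasurableSet

theorem pi_bern_eval_true_and_exists_ne (hp0 : 0 ≤ p) (hp1 : p ≤ 1) (v : Fin n) :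
    Measure.pi (fun _ => bern p) {g : Fin n → Bool | g v = true ∧ ∃ u ≠ v, g u = true}
      = ENNReal.ofReal (p * (1 - (1 - p) ^ (n - 1))) := by
  have hset : {g : Fin n → Bool | g v = true ∧ ∃ u ≠ v, g u = true}
      = {g | g v = true} \ {fun u => decide (u = v)} := by
    ext g
    simp only [Set.mem_sdiff, Set.mem_singleton_iff, funext_iff, Set.mem_ofPred_eq]
    constructor
    · rintro ⟨hv, u, hu, hgu⟩
      exact ⟨hv, fun h => by simpa [hu, hgu] using h u⟩
    · rintro ⟨hv, hne⟩
      refine ⟨hv, ?_⟩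
      by_contra! h
      exact hne fun u => by by_cases hu : u = v <;> simp_all
  have hsingle : Measure.pi (fun _ => bern p) {fun u : Fin n => decide (u = v)}
      = ENNReal.ofReal p * ENNReal.ofReal (1 - p) ^ (n - 1) := by
    rw [Measure.pi_singleton, Fintype.prod_eq_mul_prod_compl v, decide_eq_true (rfl : v = v),
      bern_singleton_true hp1, Finset.prod_congr rfl fun u hu => by
        rw [decide_eq_false (Finset.notMem_singleton.1 (Finset.mem_compl.1 hu)),
          bern_singleton_false hp0 hp1],
      Finset.prod_const, Finset.card_compl, Finset.card_singleton, Fintype.card_fin]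
  rw [hset, measure_sdiff (singleton_subset_iff.2 (by simp))
      MeasurableSet.of_discrete.nullMeasurableSet (measure_ne_top _ _),
    pi_bern_eval_true hp1, hsingle, ← ENNReal.ofReal_pow (by linarith), ← ENNReal.ofReal_mul hp0,
    ← ENNReal.ofReal_sub _ (by positivity), mul_sub, mul_one]

theorem rig_col_mem_ncard_ge_le (C : Set (Fin n → Bool)) (k : ℕ) :
    rig n m p {ω | k ≤ {w | (fun u => ω u w) ∈ C}.ncard}
      ≤ m.choose k * Measure.pi (fun _ => bern p) C ^ k := by
  rw [rig_eq_map_swap, Measure.map_apply (measurable_of_countable _) .of_discrete]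
  simpa using Measure.pi_le_choose_mul_pow (μ := fun _ : Fin m => _) (A := C) Finset.univ
    (fun _ _ => le_rfl) k

theorem rig_Wv_ge_le (hp1 : p ≤ 1) (v : Fin n) (k : ℕ) :
    rig n m p {ω | k ≤ Wv ω v} ≤ m.choose k * ENNReal.ofReal p ^ k := by
  rw [← pi_bern_eval_true hp1 v]
  exact rig_col_mem_ncard_ge_le _ k

theorem rig_Wv'_ge_le (hp0 : 0 ≤ p) (hp1 : p ≤ 1) (v : Fin n) (k : ℕ) :
    rig n m p {ω | k ≤ Wv' ω v}
      ≤ m.choose k * ENNReal.ofReal (p * (1 - (1 - p) ^ (n - 1))) ^ k := by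
  rw [← pi_bern_eval_true_and_exists_ne hp0 hp1 v]
  refine le_trans (measure_mono fun ω (hω : k ≤ Wv' ω v) => hω.trans ?_)
    (rig_col_mem_ncard_ge_le _ k)
  refine Set.ncard_le_ncard (fun w ⟨hv, hw⟩ => ?_) (Set.toFinite _)
  obtain ⟨u, hu, hne⟩ := Set.exists_ne_of_one_lt_ncard hw v
  exact ⟨hv, u, hne, hu⟩

theorem deg_le_ncard (ω : Fin n → Fin m → Bool) (v : Fin n) :
    deg ω v ≤ {uw : Fin n × Fin m | uw.1 ≠ v ∧ ω v uw.2 = true ∧ ω uw.1 uw.2 = true}.ncard := by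
  refine (Set.ncard_le_ncard (t := Prod.fst '' _) ?_ (Set.toFinite _)).trans
    (Set.ncard_image_le (Set.toFinite _))
  rintro u ⟨hne, w, hv, hu⟩
  exact ⟨(u, w), ⟨hne.symm, hv, hu⟩, rfl⟩

theorem rig_Wv_le_and_deg_ge_le (hp1 : p ≤ 1) (v : Fin n) (K k : ℕ) :
    rig n m p {ω | Wv ω v ≤ K ∧ k ≤ deg ω v}
      ≤ ((n - 1) * K).choose k * ENNReal.ofReal p ^ k := by
  classical
  let support (f : Fin m → Bool) : Finset (Fin m) := Finset.univ.filter (f · = true)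
  let pairs (f : Fin m → Bool) : Finset (Fin n × Fin m) := (Finset.univ.erase v) ×ˢ support f
  let rowEq (f : Fin m → Bool) : Set (Fin n × Fin m → Bool) :=
    univ.pi fun i => if i.1 = v then {f i.2} else univ
  let event (f : Fin m → Bool) : Set (Fin n × Fin m → Bool) :=
    rowEq f ∩ {x | k ≤ {i | i ∈ pairs f ∧ x i ∈ ({true} : Set Bool)}.ncard}
  let rows : Finset (Fin m → Bool) := Finset.univ.filter fun f => (support f).card ≤ K
  let flat := Measure.pi fun _ : Fin n × Fin m => bern p
  have hcover : Function.curry ⁻¹' {ω | Wv ω v ≤ K ∧ k ≤ deg ω v} ⊆ ⋃ f ∈ rows, event f := by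
    rintro x ⟨hK, hk⟩
    have hW : Wv (Function.curry x) v = (support fun w => x (v, w)).card := by
      rw [Wv, ← Set.ncard_coe_finset]
      congr 1
      ext w
      simp [support, Function.curry]
    refine mem_biUnion (x := fun w => x (v, w)) (by simpa [rows, hW] using hK) ⟨?_, ?_⟩
    · rintro ⟨u, w⟩ -
      dsimp only
      split_ifs with h
      · simp [← h]
      · trivial
    · refine hk.trans ((deg_le_ncard _ v).trans (le_of_eq ?_))
      congr 1
      ext ⟨u, w⟩
      simp [pairs, support, Function.curry, and_assoc]
  have hevent : ∀ f ∈ rows,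
      flat (event f) ≤ ((n - 1) * K).choose k * (flat (rowEq f) * ENNReal.ofReal p ^ k) := by
    intro f hf
    refine (Measure.pi_univ_pi_inter_le_choose_mul_pow ?_
      (fun _ _ => (bern_singleton_true hp1).le) k).trans ?_
    · intro i hi
      simp [(Finset.ne_of_mem_erase (Finset.mem_product.1 hi).1)]
    · have hcard : (pairs f).card ≤ (n - 1) * K := by
        rw [Finset.card_product, Finset.card_erase_of_mem (Finset.mem_univ v), Finset.card_univ,
          Fintype.card_fin]
        exact Nat.mul_le_mul_left _ (Finset.mem_filter.1 hf).2
      gcongr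
  have hdisj : (rows : Set (Fin m → Bool)).PairwiseDisjoint rowEq := by
    intro f _ g _ hfg
    refine Set.disjoint_left.2 fun x hf hg => hfg (funext fun w => ?_)
    have hfw := hf (v, w) trivial
    have hgw := hg (v, w) trivial
    simp_all
  calc rig n m p {ω | Wv ω v ≤ K ∧ k ≤ deg ω v}
      = flat (Function.curry ⁻¹' {ω | Wv ω v ≤ K ∧ k ≤ deg ω v}) := by
        rw [rig_eq_map_curry, Measure.map_apply (measurable_of_countable _) .of_discrete]
    _ ≤ ∑ f ∈ rows, ((n - 1) * K).choose k * (flat (rowEq f) * ENNReal.ofReal p ^ k) :=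
        (measure_mono hcover).trans
          ((measure_biUnion_finset_le _ _).trans (Finset.sum_le_sum hevent))
    _ = ((n - 1) * K).choose k * ENNReal.ofReal p ^ k * flat (⋃ f ∈ rows, rowEq f) := by
        rw [measure_biUnion_finset hdisj fun _ _ => .of_discrete, Finset.mul_sum]
        exact Finset.sum_congr rfl fun _ _ => by ring
    _ ≤ ((n - 1) * K).choose k * ENNReal.ofReal p ^ k := mul_le_of_le_one_right' prob_le_one

theorem d0_nonneg (hp0 : 0 ≤ p) (hp1 : p ≤ 1) : 0 ≤ d0 n m p := by
  have : (1 - p) ^ (n - 1) ≤ 1 := pow_le_one₀ (by linarith) (by linarith)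
  unfold d0
  have := sub_nonneg.2 this
  positivity

theorem d0_le_mul (hp0 : 0 ≤ p) (hp1 : p ≤ 1) : d0 n m p ≤ m * p := by
  have : 0 ≤ (1 - p) ^ (n - 1) := pow_nonneg (by linarith) _
  unfold d0
  nlinarith [mul_nonneg (Nat.cast_nonneg m) hp0]

theorem d0_le_d1 (hp0 : 0 ≤ p) (hp1 : p ≤ 1) : d0 n m p ≤ d1 n m p := by
  have hbernoulli : 1 - p * ((n - 1 : ℕ) : ℝ) ≤ (1 - p) ^ (n - 1) := by
    have := one_add_mul_sub_le_pow (by linarith : (-1 : ℝ) ≤ 1 - p) (n - 1)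
    linarith
  have hn : ((n - 1 : ℕ) : ℝ) ≤ n := by exact_mod_cast n.sub_le 1
  have hmp : 0 ≤ (m : ℝ) * p := by positivity
  unfold d0 d1
  nlinarith [mul_le_mul_of_nonneg_left hn (mul_nonneg hmp hp0)]

def degreeBoundsEvent (n m : ℕ) (p : ℝ) : Set (Fin n → Fin m → Bool) :=
  {ω | ∀ v, (Wv ω v : ℝ) ≤ 4 * m * p ∧ (Wv' ω v : ℝ) ≤ 4 * d0 n m p ∧
    (deg ω v : ℝ) ≤ 12 * d1 n m p}

theorem compl_degreeBoundsEvent_subset :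
    (degreeBoundsEvent n m p)ᶜ ⊆ ⋃ v, {ω | ⌈4 * m * p⌉₊ ≤ Wv ω v} ∪
      {ω | ⌈4 * d0 n m p⌉₊ ≤ Wv' ω v} ∪
      {ω | Wv ω v ≤ ⌊4 * m * p⌋₊ ∧ ⌈12 * d1 n m p⌉₊ ≤ deg ω v} := by
  intro ω hω
  obtain ⟨v, hv⟩ := not_forall.1 hω
  refine mem_iUnion.2 ⟨v, ?_⟩
  by_cases hW : (Wv ω v : ℝ) ≤ 4 * m * p
  · by_cases hW' : (Wv' ω v : ℝ) ≤ 4 * d0 n m p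
    · have hdeg : ¬(deg ω v : ℝ) ≤ 12 * d1 n m p := fun h => hv ⟨hW, hW', h⟩
      exact Or.inr ⟨Nat.le_floor hW, Nat.ceil_le.2 (not_le.1 hdeg).le⟩
    · exact Or.inl (Or.inr (Nat.ceil_le.2 (not_le.1 hW').le))
  · exact Or.inl (Or.inl (Nat.ceil_le.2 (not_le.1 hW).le))

theorem rig_compl_degreeBoundsEvent_le_union_bound (hp0 : 0 ≤ p) (hp1 : p ≤ 1) :
    rig n m p (degreeBoundsEvent n m p)ᶜ
      ≤ n * (m.choose ⌈4 * m * p⌉₊ * ENNReal.ofReal p ^ ⌈4 * m * p⌉₊ +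
        m.choose ⌈4 * d0 n m p⌉₊ *
          ENNReal.ofReal (p * (1 - (1 - p) ^ (n - 1))) ^ ⌈4 * d0 n m p⌉₊ +
        ((n - 1) * ⌊4 * m * p⌋₊).choose ⌈12 * d1 n m p⌉₊ *
          ENNReal.ofReal p ^ ⌈12 * d1 n m p⌉₊) := by
  refine (measure_mono compl_degreeBoundsEvent_subset).trans
    ((measure_iUnion_fintype_le (rig n m p) _).trans ?_)
  refine (Finset.sum_le_card_nsmul _ _ _ fun v _ =>
    (measure_union_le (μ := rig n m p) _ _).trans ?_).trans_eq
      (by rw [Finset.card_univ, Fintype.card_fin, nsmul_eq_mul])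
  gcongr
  · exact (measure_union_le _ _).trans
      (add_le_add (rig_Wv_ge_le hp1 v _) (rig_Wv'_ge_le hp0 hp1 v _))
  · exact rig_Wv_le_and_deg_ge_le hp1 v _ _

/- Each term of the union bound is at most `n ^ (-1/10)` by `natCast_mul_choose_mul_ofReal_pow_le`
with `c = 4, 4, 3` and `k ≥ 3.96 log n, 3.96 log n, 11.88 log n`: in all three cases
`(log c - 1) k ≥ 1.1 log n`. -/
theorem rig_compl_degreeBoundsEvent_le (hn : 0 < n) (hp0 : 0 ≤ p) (hp1 : p ≤ 1)
    (hd0 : 99 / 100 * Real.log n ≤ d0 n m p) :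
    rig n m p (degreeBoundsEvent n m p)ᶜ ≤ ENNReal.ofReal (3 * (n : ℝ) ^ (-(1 / 10 : ℝ))) := by
  have hq : 0 ≤ 1 - (1 - p) ^ (n - 1) := sub_nonneg.2 (pow_le_one₀ (by linarith) (by linarith))
  have hd0m : d0 n m p ≤ m * p := d0_le_mul hp0 hp1
  have hd0d1 : d0 n m p ≤ d1 n m p := d0_le_d1 hp0 hp1
  have hlog4 : 1 + 1 / 10 ≤ (Real.log 4 - 1) * (4 * (99 / 100)) := by
    rw [show (4 : ℝ) = 2 ^ 2 by norm_num, Real.log_pow]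
    linarith [Real.log_two_gt_d9]
  have hlog3 : 1 + 1 / 10 ≤ (Real.log 3 - 1) * (12 * (99 / 100)) := by
    linarith [Real.log_three_gt_d9]
  have he4 : Real.exp 1 ≤ 4 := by linarith [Real.exp_one_lt_d9]
  have he3 : Real.exp 1 ≤ 3 := by linarith [Real.exp_one_lt_d9]
  have hdeg_mean : 3 * (((n - 1) * ⌊4 * m * p⌋₊ : ℕ) : ℝ) * p ≤ 12 * d1 n m p := by
    have hK : (⌊4 * m * p⌋₊ : ℝ) ≤ 4 * m * p := Nat.floor_le (by positivity)
    have hn1 : ((n - 1 : ℕ) : ℝ) ≤ n := by exact_mod_cast n.sub_le 1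
    push_cast
    unfold d1
    nlinarith [mul_le_mul hn1 hK (Nat.cast_nonneg _) (Nat.cast_nonneg _)]
  have hW := natCast_mul_choose_mul_ofReal_pow_le (M := m) hn hp0 he4 (Nat.le_ceil _)
    (by linarith [Nat.le_ceil (4 * m * p)]) hlog4
  have hW' := natCast_mul_choose_mul_ofReal_pow_le (M := m) hn (mul_nonneg hp0 hq) he4
    ((le_of_eq (by unfold d0; ring)).trans (Nat.le_ceil (4 * d0 n m p)))
    (by linarith [Nat.le_ceil (4 * d0 n m p)]) hlog4
  have hdeg := natCast_mul_choose_mul_ofReal_pow_le hn hp0 he3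
    (hdeg_mean.trans (Nat.le_ceil _)) (by linarith [Nat.le_ceil (12 * d1 n m p)]) hlog3
  refine (rig_compl_degreeBoundsEvent_le_union_bound hp0 hp1).trans ?_
  set r := (n : ℝ) ^ (-(1 / 10 : ℝ))
  have hr : 0 ≤ r := by positivity
  rw [mul_add, mul_add, show 3 * r = r + r + r by ring, ENNReal.ofReal_add (by positivity) hr,
    ENNReal.ofReal_add hr hr]
  exact add_le_add (add_le_add hW hW') hdeg

end RandomIntersectionGraph

theorem eventually_mul_log_le_d0 (m : ℕ → ℕ) (p : ℕ → ℝ) (hp : ∀ n, p n ∈ Set.Icc (0 : ℝ) 1)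
    (hd0 : 1 ≤ liminf (fun n : ℕ => d0 n (m n) (p n) / Real.log n) atTop) {r : ℝ} (hr : r < 1) :
    ∀ᶠ n : ℕ in atTop, r * Real.log n ≤ d0 n (m n) (p n) := by
  have hbdd : IsBoundedUnder (· ≥ ·) atTop fun n : ℕ => d0 n (m n) (p n) / Real.log n :=
    isBoundedUnder_of ⟨0, fun n =>
      div_nonneg (d0_nonneg (hp n).1 (hp n).2) (Real.log_natCast_nonneg n)⟩
  filter_upwards [eventually_lt_of_lt_liminf (hr.trans_le hd0) hbdd, eventually_ge_atTop 2]
    with n hn hn2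
  exact ((lt_div_iff₀ (Real.log_pos (by exact_mod_cast hn2))).1 hn).le

theorem degree_upper_bounds_general (m : ℕ → ℕ) (p : ℕ → ℝ)
    (hp : ∀ n, p n ∈ Set.Ioo (0 : ℝ) 1)
    (hd0 : 1 ≤ Filter.liminf (fun (n : ℕ) => d0 n (m n) (p n) / Real.log n) atTop) :
    Tendsto (fun (n : ℕ) => (rig n (m n) (p n)
        {ω | ∀ v : Fin n,
          (Wv ω v : ℝ) ≤ 4 * (m n : ℝ) * p n ∧
          (Wv' ω v : ℝ) ≤ 4 * d0 n (m n) (p n) ∧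
          (deg ω v : ℝ) ≤ 12 * d1 n (m n) (p n)}).toReal)
      atTop (nhds 1) := by
  change Tendsto (fun n => (rig n (m n) (p n) (degreeBoundsEvent n (m n) (p n))).toReal) atTop _
  have hd0_large := eventually_mul_log_le_d0 m p (fun n => Ioo_subset_Icc_self (hp n)) hd0
    (by norm_num : (99 / 100 : ℝ) < 1)
  have hrate : Tendsto (fun n : ℕ => 3 * (n : ℝ) ^ (-(1 / 10 : ℝ))) atTop (nhds 0) := by
    simpa using ((tendsto_rpow_neg_atTop (by norm_num : (0 : ℝ) < 1 / 10)).comp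
      tendsto_natCast_atTop_atTop).const_mul 3
  have hbad : Tendsto (fun n => (rig n (m n) (p n) (degreeBoundsEvent n (m n) (p n))ᶜ).toReal)
      atTop (nhds 0) := by
    refine squeeze_zero' (Eventually.of_forall fun _ => ENNReal.toReal_nonneg) ?_ hrate
    filter_upwards [hd0_large, eventually_gt_atTop 0] with n hd hn
    exact ENNReal.toReal_le_of_le_ofReal (by positivity)
      (rig_compl_degreeBoundsEvent_le hn (hp n).1.le (hp n).2.le hd)
  rw [← sub_zero (1 : ℝ)]
  refine (hbad.const_sub 1).congr fun n => ?_
  rw [prob_compl_eq_one_sub MeasurableSet.of_discrete, ENNReal.toReal_sub_of_le prob_le_one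
    ENNReal.one_ne_top, ENNReal.toReal_one, sub_sub_cancel]

theorem degree_upper_bounds (m : ℕ → ℕ) (p : ℕ → ℝ)
    (hp : ∀ n, p n ∈ Set.Ioo (0 : ℝ) 1)
    (hps : ∀ᶠ (n : ℕ) in atTop, p n ≤ Real.sqrt (3 * Real.log n / m n))
    (hd0 : 1 ≤ Filter.liminf (fun (n : ℕ) => d0 n (m n) (p n) / Real.log n) atTop) :
    Tendsto (fun (n : ℕ) => (rig n (m n) (p n)
        {ω | ∀ v : Fin n,
          (Wv ω v : ℝ) ≤ 4 * (m n : ℝ) * p n ∧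
          (Wv' ω v : ℝ) ≤ 4 * d0 n (m n) (p n) ∧
          (deg ω v : ℝ) ≤ 12 * d1 n (m n) (p n)}).toReal)
      atTop (nhds 1) :=
  degree_upper_bounds_general m p hp hd0
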